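/- arXiv:2401.06107 — 2 statements merged into one kernel-verified Lean document; each statement's English description precedes it below -/
import Mathlib

section
/- Let g ≥ 2 and let M: [0,∞) → M_{2g×2g}(ℝ) be given by entries m_{jl}(s) = e^{−s c_{jl}} at the nonzero positions (with c_{jl} > 0) and 0 at positions (2i,2i−1),(2i−1,2i). Then the spectral radius s ↦ λ(M(s)) is continuous and strictly decreasing on [0,∞), λ(M(0)) = 2g−1 > 1, and λ(M(s)) → 0 as s → ∞; hence there is a unique s₀ > 0 with λ(M(s₀)) = 1. -/
open Matrix

/-- The spectral radius of a real square matrix: the supremum of the absolute values of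
its complex eigenvalues. -/
noncomputable def specRad {n : ℕ} (M : Matrix (Fin n) (Fin n) ℝ) : ℝ :=
  sSup {r : ℝ | ∃ μ ∈ spectrum ℂ (M.map (algebraMap ℝ ℂ)), r = ‖μ‖}

open Filter ENNReal

attribute [local instance] Matrix.linftyOpSeminormedAddCommGroup Matrix.linftyOpNormedAddCommGroup
  Matrix.linftyOpNormedRing Matrix.linftyOpNormedAlgebra Matrix.linftyOpNormedSpace

variable {N : ℕ}

noncomputable instance : CompleteSpace (Matrix (Fin N) (Fin N) ℂ) :=
  (by infer_instance : CompleteSpace (Fin N → Fin N → ℂ))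

namespace SpecAux

noncomputable def cplx (A : Matrix (Fin N) (Fin N) ℝ) : Matrix (Fin N) (Fin N) ℂ :=
  A.map (algebraMap ℝ ℂ)

lemma nnnorm_cplx (A : Matrix (Fin N) (Fin N) ℝ) : ‖cplx A‖₊ = ‖A‖₊ := by
  have h : ∀ i j, ‖cplx A i j‖₊ = ‖A i j‖₊ := fun i j => by
    simp [cplx, Matrix.map_apply, Complex.coe_algebraMap, Complex.nnnorm_real]
  rw [Matrix.linfty_opNNNorm_def, Matrix.linfty_opNNNorm_def]
  exact congrArg _ (funext fun i => Finset.sum_congr rfl fun j _ => h i j)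

lemma cplx_pow (A : Matrix (Fin N) (Fin N) ℝ) (n : ℕ) : (cplx A) ^ n = cplx (A ^ n) := by
  simpa [cplx, RingHom.mapMatrix_apply] using (map_pow ((algebraMap ℝ ℂ).mapMatrix) A n).symm

lemma specRad_mem_aux [NeZero N] (A : Matrix (Fin N) (Fin N) ℝ) :
    {r : ℝ | ∃ μ ∈ spectrum ℂ (cplx A), r = ‖μ‖}.Nonempty ∧
    BddAbove {r : ℝ | ∃ μ ∈ spectrum ℂ (cplx A), r = ‖μ‖} := by
  constructor
  · obtain ⟨μ, hμ⟩ := spectrum.nonempty (cplx A)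
    exact ⟨‖μ‖, μ, hμ, rfl⟩
  · refine ⟨‖cplx A‖, ?_⟩
    rintro r ⟨μ, hμ, rfl⟩
    simpa using spectrum.norm_le_norm_of_mem hμ

lemma specRad_eq [NeZero N] (A : Matrix (Fin N) (Fin N) ℝ) :
    specRad A = (spectralRadius ℂ (cplx A)).toReal := by
  obtain ⟨hne, hbdd⟩ := specRad_mem_aux A
  have hfin : spectralRadius ℂ (cplx A) ≠ ⊤ :=
    ((spectrum.spectralRadius_le_nnnorm (cplx A)).trans_lt coe_lt_top).ne
  refine le_antisymm (csSup_le hne ?_) ?_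
  · rintro r ⟨μ, hμ, rfl⟩
    have h1 : (‖μ‖₊ : ℝ≥0∞) ≤ spectralRadius ℂ (cplx A) := le_iSup₂ (f := fun k (_ : k ∈ spectrum ℂ (cplx A)) => (‖k‖₊ : ℝ≥0∞)) μ hμ
    have := ENNReal.toReal_mono hfin h1
    simpa using this
  · have h2 : spectralRadius ℂ (cplx A) ≤ ENNReal.ofReal (sSup {r : ℝ | ∃ μ ∈ spectrum ℂ (cplx A), r = ‖μ‖}) := by
      rw [spectralRadius]
      refine iSup₂_le fun μ hμ => ?_
      rw [← ENNReal.ofReal_coe_nnreal, coe_nnnorm]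
      exact ENNReal.ofReal_le_ofReal (le_csSup hbdd ⟨μ, hμ, rfl⟩)
    have h0 : 0 ≤ sSup {r : ℝ | ∃ μ ∈ spectrum ℂ (cplx A), r = ‖μ‖} := by
      obtain ⟨r, μ, hμ, rfl⟩ := hne
      exact le_trans (norm_nonneg μ) (le_csSup hbdd ⟨μ, hμ, rfl⟩)
    calc (spectralRadius ℂ (cplx A)).toReal ≤ (ENNReal.ofReal _).toReal := ENNReal.toReal_mono ofReal_ne_top h2
      _ = _ := ENNReal.toReal_ofReal h0

lemma specRad_nonneg [NeZero N] (A : Matrix (Fin N) (Fin N) ℝ) : 0 ≤ specRad A := by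
  obtain ⟨hne, hbdd⟩ := specRad_mem_aux A
  obtain ⟨r, μ, hμ, rfl⟩ := hne
  exact le_trans (norm_nonneg μ) (le_csSup hbdd ⟨μ, hμ, rfl⟩)

end SpecAux

namespace SpecAux

lemma pow_entry_le {A C : Matrix (Fin N) (Fin N) ℝ} (h0 : ∀ i j, 0 ≤ A i j)
    (h0C : ∀ i j, 0 ≤ C i j) (h1 : ∀ i j, A i j ≤ C i j) (n : ℕ) :
    ∀ i j, 0 ≤ (A ^ n) i j ∧ (A ^ n) i j ≤ (C ^ n) i j := by
  induction n with
  | zero =>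
    intro i j
    simp only [pow_zero, Matrix.one_apply]
    split <;> norm_num
  | succ n ih =>
    intro i j
    rw [pow_succ, pow_succ, Matrix.mul_apply, Matrix.mul_apply]
    refine ⟨Finset.sum_nonneg fun k _ => mul_nonneg (ih i k).1 (h0 k j), ?_⟩
    refine Finset.sum_le_sum fun k _ => mul_le_mul (ih i k).2 (h1 k j) (h0 k j) ?_
    exact le_trans (ih i k).1 (ih i k).2

lemma pow_diag_le {A : Matrix (Fin N) (Fin N) ℝ} (h0 : ∀ i j, 0 ≤ A i j) (j : Fin N) (n : ℕ) :
    (A j j) ^ n ≤ (A ^ n) j j := by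
  induction n with
  | zero => simp [Matrix.one_apply]
  | succ n ih =>
    rw [pow_succ, pow_succ, Matrix.mul_apply]
    calc A j j ^ n * A j j ≤ (A ^ n) j j * A j j :=
          mul_le_mul_of_nonneg_right ih (h0 j j)
      _ ≤ ∑ k, (A ^ n) j k * A k j := by
          refine Finset.single_le_sum (f := fun k => (A ^ n) j k * A k j)
            (fun k _ => mul_nonneg (pow_entry_le h0 h0 (fun _ _ => le_refl _) n j k).1 (h0 k j))
            (Finset.mem_univ j)

lemma nnnorm_le_of_entry {A B : Matrix (Fin N) (Fin N) ℝ}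
    (h : ∀ i j, ‖A i j‖₊ ≤ ‖B i j‖₊) : ‖A‖₊ ≤ ‖B‖₊ := by
  rw [Matrix.linfty_opNNNorm_def, Matrix.linfty_opNNNorm_def]
  exact Finset.sup_mono_fun fun i _ => Finset.sum_le_sum fun j _ => h i j

lemma entry_nnnorm_le {A : Matrix (Fin N) (Fin N) ℝ} (i j : Fin N) : ‖A i j‖₊ ≤ ‖A‖₊ := by
  rw [Matrix.linfty_opNNNorm_def]
  exact le_trans (Finset.single_le_sum (f := fun j => ‖A i j‖₊) (fun _ _ => by positivity)
    (Finset.mem_univ j)) (Finset.le_sup (f := fun i => ∑ j, ‖A i j‖₊) (Finset.mem_univ i))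

lemma real_nnnorm_le {x y : ℝ} (hx : 0 ≤ x) (hxy : x ≤ y) : ‖x‖₊ ≤ ‖y‖₊ := by
  rw [← NNReal.coe_le_coe]
  simpa [Real.norm_eq_abs, abs_of_nonneg hx, abs_of_nonneg (hx.trans hxy)] using hxy

end SpecAux

namespace SpecAux

open scoped NNReal

lemma gelfand (A : Matrix (Fin N) (Fin N) ℝ) :
    Tendsto (fun n : ℕ => (‖A ^ n‖₊ : ℝ≥0∞) ^ (1 / n : ℝ)) atTop
      (nhds (spectralRadius ℂ (cplx A))) := by
  have := spectrum.pow_nnnorm_pow_one_div_tendsto_nhds_spectralRadius (cplx A)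
  convert this using 2 with n
  rw [cplx_pow, nnnorm_cplx]

/-- Key comparison: if `0 ≤ A ≤ θ • B` entrywise with `B` entrywise nonneg,
then `specRad A ≤ θ * specRad B`. -/
lemma specRad_le_smul [NeZero N] {A B : Matrix (Fin N) (Fin N) ℝ} {θ : ℝ} (hθ : 0 ≤ θ)
    (hA : ∀ i j, 0 ≤ A i j) (hB : ∀ i j, 0 ≤ B i j)
    (hAB : ∀ i j, A i j ≤ θ * B i j) : specRad A ≤ θ * specRad B := by
  set θ' : ℝ≥0 := ⟨θ, hθ⟩ with hθ'
  have key : spectralRadius ℂ (cplx A) ≤ (θ' : ℝ≥0∞) * spectralRadius ℂ (cplx B) := by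
    have hC : ∀ i j, 0 ≤ (θ • B) i j := fun i j => by
      simpa [Matrix.smul_apply, smul_eq_mul] using mul_nonneg hθ (hB i j)
    have hpow : ∀ n : ℕ, (‖A ^ n‖₊ : ℝ≥0∞) ≤ (θ' : ℝ≥0∞) ^ n * ‖B ^ n‖₊ := by
      intro n
      have h1 : ‖A ^ n‖₊ ≤ ‖(θ • B) ^ n‖₊ := by
        refine nnnorm_le_of_entry fun i j => ?_
        have h := pow_entry_le hA hC (fun i j => by
          simpa [Matrix.smul_apply, smul_eq_mul] using hAB i j) n i j
        exact real_nnnorm_le h.1 h.2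
      have h2 : ‖(θ • B) ^ n‖₊ = θ' ^ n * ‖B ^ n‖₊ := by
        rw [smul_pow, nnnorm_smul]
        congr 1
        ext
        simp [Real.norm_eq_abs, abs_of_nonneg hθ, abs_of_nonneg (pow_nonneg hθ n), hθ']
        exact (NNReal.coe_pow ⟨θ, hθ⟩ n).symm
      rw [h2] at h1
      calc (‖A ^ n‖₊ : ℝ≥0∞) ≤ ((θ' ^ n * ‖B ^ n‖₊ : ℝ≥0) : ℝ≥0∞) := ENNReal.coe_le_coe.2 h1
        _ = (θ' : ℝ≥0∞) ^ n * ‖B ^ n‖₊ := by push_cast; ring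
    have hAlim := gelfand A
    have hBlim : Tendsto (fun n : ℕ => (θ' : ℝ≥0∞) * (‖B ^ n‖₊ : ℝ≥0∞) ^ (1 / n : ℝ)) atTop
        (nhds ((θ' : ℝ≥0∞) * spectralRadius ℂ (cplx B))) :=
      ENNReal.Tendsto.const_mul (gelfand B) (Or.inr ENNReal.coe_ne_top)
    refine le_of_tendsto_of_tendsto hAlim hBlim ?_
    filter_upwards [eventually_ge_atTop 1] with n hn
    have hn' : (n : ℝ) ≠ 0 := Nat.cast_ne_zero.2 (by omega)
    calc (‖A ^ n‖₊ : ℝ≥0∞) ^ (1 / n : ℝ)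
        ≤ ((θ' : ℝ≥0∞) ^ n * ‖B ^ n‖₊) ^ (1 / n : ℝ) :=
          ENNReal.rpow_le_rpow (hpow n) (by positivity)
      _ = ((θ' : ℝ≥0∞) ^ n) ^ (1 / n : ℝ) * (‖B ^ n‖₊ : ℝ≥0∞) ^ (1 / n : ℝ) :=
          ENNReal.mul_rpow_of_nonneg _ _ (by positivity)
      _ = (θ' : ℝ≥0∞) * (‖B ^ n‖₊ : ℝ≥0∞) ^ (1 / n : ℝ) := by
          rw [← ENNReal.rpow_natCast (θ' : ℝ≥0∞) n, ← ENNReal.rpow_mul,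
            mul_one_div_cancel hn', ENNReal.rpow_one]
  have hfinB : spectralRadius ℂ (cplx B) ≠ ⊤ :=
    ((spectrum.spectralRadius_le_nnnorm (cplx B)).trans_lt ENNReal.coe_lt_top).ne
  rw [specRad_eq, specRad_eq]
  calc (spectralRadius ℂ (cplx A)).toReal
      ≤ ((θ' : ℝ≥0∞) * spectralRadius ℂ (cplx B)).toReal :=
        ENNReal.toReal_mono (by exact ENNReal.mul_ne_top ENNReal.coe_ne_top hfinB) key
    _ = θ * (spectralRadius ℂ (cplx B)).toReal := by
        rw [ENNReal.toReal_mul, ENNReal.coe_toReal]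
        simp [hθ']
        exact Or.inl rfl

lemma diag_le_specRad [NeZero N] {A : Matrix (Fin N) (Fin N) ℝ}
    (hA : ∀ i j, 0 ≤ A i j) (j : Fin N) : A j j ≤ specRad A := by
  set d : ℝ≥0 := ⟨A j j, hA j j⟩ with hd
  have key : (d : ℝ≥0∞) ≤ spectralRadius ℂ (cplx A) := by
    refine ge_of_tendsto (gelfand A) ?_
    filter_upwards [eventually_ge_atTop 1] with n hn
    have hn' : (n : ℝ) ≠ 0 := Nat.cast_ne_zero.2 (by omega)
    have h1 : (d : ℝ≥0∞) ^ n ≤ (‖A ^ n‖₊ : ℝ≥0∞) := by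
      have h2 : (A j j) ^ n ≤ (A ^ n) j j := pow_diag_le hA j n
      have h3 : ‖(A j j) ^ n‖₊ ≤ ‖(A ^ n) j j‖₊ :=
        real_nnnorm_le (pow_nonneg (hA j j) n) h2
      have h4 : ‖(A j j) ^ n‖₊ = d ^ n := by
        ext; simp [Real.norm_eq_abs, abs_of_nonneg (hA j j), abs_of_nonneg (pow_nonneg (hA j j) n), hd]
        exact (NNReal.coe_pow ⟨A j j, hA j j⟩ n).symm
      calc (d : ℝ≥0∞) ^ n = ((d ^ n : ℝ≥0) : ℝ≥0∞) := by push_cast; ring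
        _ ≤ (‖(A ^ n) j j‖₊ : ℝ≥0∞) := ENNReal.coe_le_coe.2 (h4 ▸ h3)
        _ ≤ _ := ENNReal.coe_le_coe.2 (entry_nnnorm_le j j)
    calc (d : ℝ≥0∞) = ((d : ℝ≥0∞) ^ n) ^ (1 / n : ℝ) := by
          rw [← ENNReal.rpow_natCast _ n, ← ENNReal.rpow_mul, mul_one_div_cancel hn',
            ENNReal.rpow_one]
      _ ≤ (‖A ^ n‖₊ : ℝ≥0∞) ^ (1 / n : ℝ) := ENNReal.rpow_le_rpow h1 (by positivity)
  have hfin : spectralRadius ℂ (cplx A) ≠ ⊤ :=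
    ((spectrum.spectralRadius_le_nnnorm (cplx A)).trans_lt ENNReal.coe_lt_top).ne
  rw [specRad_eq]
  have := ENNReal.toReal_mono hfin key
  rw [ENNReal.coe_toReal] at this
  exact this

end SpecAux

namespace SpecAux

lemma partner_card (g : ℕ) (hg : 1 ≤ g) (j : Fin (2*g)) :
    (Finset.univ.filter fun l : Fin (2*g) => j ≠ l ∧ (j:ℕ)/2 = (l:ℕ)/2).card = 1 := by
  have hj := j.isLt
  refine Finset.card_eq_one.2 ⟨⟨2*((j:ℕ)/2) + 1 - (j:ℕ)%2, by omega⟩, ?_⟩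
  ext l
  have hl := l.isLt
  simp only [Finset.mem_filter, Finset.mem_univ, true_and, Finset.mem_singleton,
    Fin.ext_iff, Ne]
  omega

end SpecAux

/-- Let `g ≥ 2` and let `M(s)` be the `2g × 2g` matrix whose `(j,l)` entry is
`e^{-s c_{jl}}` with `c_{jl} > 0` away from the zero pattern, and `0` at the positions
`(2i, 2i-1)`, `(2i-1, 2i)`. Then the spectral radius `s ↦ λ(M(s))` is continuous and
strictly decreasing on `[0, ∞)`, `λ(M(0)) = 2g - 1 > 1`, and `λ(M(s)) → 0` as
`s → ∞`; hence there is a unique `s₀ > 0` with `λ(M(s₀)) = 1`. -/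
theorem specRad_strictAnti_exists_unique (g : ℕ) (hg : 2 ≤ g)
    (c : Fin (2*g) → Fin (2*g) → ℝ)
    (hc : ∀ j l : Fin (2*g), ¬(j ≠ l ∧ (j : ℕ) / 2 = (l : ℕ) / 2) → 0 < c j l)
    (M : ℝ → Matrix (Fin (2*g)) (Fin (2*g)) ℝ)
    (hM : ∀ (s : ℝ) (j l : Fin (2*g)),
      M s j l = if j ≠ l ∧ (j : ℕ) / 2 = (l : ℕ) / 2 then 0
        else Real.exp (-(s * c j l))) :
    ContinuousOn (fun s => specRad (M s)) (Set.Ici 0) ∧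
    StrictAntiOn (fun s => specRad (M s)) (Set.Ici 0) ∧
    specRad (M 0) = 2*(g:ℝ) - 1 ∧ (1 : ℝ) < 2*(g:ℝ) - 1 ∧
    Filter.Tendsto (fun s => specRad (M s)) Filter.atTop (nhds 0) ∧
    ∃! s₀ : ℝ, 0 < s₀ ∧ specRad (M s₀) = 1 := by
  haveI : NeZero (2*g) := ⟨by omega⟩
  set r : ℝ → ℝ := fun s => specRad (M s) with hr
  have hgR : (2:ℝ) ≤ (g:ℝ) := by exact_mod_cast hg
  -- entries nonnegative
  have h0 : ∀ (s : ℝ) (i j : Fin (2*g)), 0 ≤ M s i j := by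
    intro s i j
    rw [hM]
    split
    · exact le_refl 0
    · exact (Real.exp_pos _).le
  set j0 : Fin (2*g) := ⟨0, by omega⟩ with hj0
  set Sfin : Finset (Fin (2*g) × Fin (2*g)) :=
    Finset.univ.filter (fun p => ¬(p.1 ≠ p.2 ∧ (p.1:ℕ)/2 = (p.2:ℕ)/2)) with hSfin
  have hmem00 : (j0, j0) ∈ Sfin := by simp [hSfin]
  have hSne : Sfin.Nonempty := ⟨_, hmem00⟩
  set cmin := Sfin.inf' hSne (fun p => c p.1 p.2) with hcmin
  set cmax := Sfin.sup' hSne (fun p => c p.1 p.2) with hcmax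
  have hcmin_pos : 0 < cmin := by
    rw [hcmin, Finset.lt_inf'_iff]
    intro p hp
    refine hc p.1 p.2 ?_
    simpa [hSfin] using hp
  have hcc : cmin ≤ cmax :=
    le_trans (Finset.inf'_le _ hmem00) (Finset.le_sup' (f := fun p => c p.1 p.2) hmem00)
  have hcmax_pos : 0 < cmax := lt_of_lt_of_le hcmin_pos hcc
  have hcle : ∀ i j : Fin (2*g), ¬(i ≠ j ∧ (i:ℕ)/2 = (j:ℕ)/2) →
      cmin ≤ c i j ∧ c i j ≤ cmax := by
    intro i j hij
    have hm : (i, j) ∈ Sfin := by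
      simp only [hSfin, Finset.mem_filter, Finset.mem_univ, true_and]
      exact hij
    exact ⟨Finset.inf'_le _ hm, Finset.le_sup' (f := fun p => c p.1 p.2) hm⟩
  have key1 : ∀ {s t : ℝ}, s ≤ t → ∀ i j, M t i j ≤ Real.exp (-((t - s) * cmin)) * M s i j := by
    intro s t hst i j
    rw [hM, hM]
    by_cases h : i ≠ j ∧ (i:ℕ)/2 = (j:ℕ)/2
    · simp [h]
    · rw [if_neg h, if_neg h, ← Real.exp_add]
      apply Real.exp_le_exp.2
      have h1 : cmin ≤ c i j := (hcle i j h).1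
      nlinarith
  have key2 : ∀ {s t : ℝ}, s ≤ t → ∀ i j, M s i j ≤ Real.exp ((t - s) * cmax) * M t i j := by
    intro s t hst i j
    rw [hM, hM]
    by_cases h : i ≠ j ∧ (i:ℕ)/2 = (j:ℕ)/2
    · simp [h]
    · rw [if_neg h, if_neg h, ← Real.exp_add]
      apply Real.exp_le_exp.2
      have h1 : c i j ≤ cmax := (hcle i j h).2
      nlinarith
  have hub : ∀ {s t : ℝ}, s ≤ t → r t ≤ Real.exp (-((t - s) * cmin)) * r s :=
    fun {s t} hst => SpecAux.specRad_le_smul (Real.exp_pos _).le (h0 t) (h0 s) (key1 hst)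
  have hlb : ∀ {s t : ℝ}, s ≤ t → r s ≤ Real.exp ((t - s) * cmax) * r t :=
    fun {s t} hst => SpecAux.specRad_le_smul (Real.exp_pos _).le (h0 s) (h0 t) (key2 hst)
  have hpos : ∀ s : ℝ, 0 < r s := by
    intro s
    have hd : M s j0 j0 = Real.exp (-(s * c j0 j0)) := by rw [hM]; simp
    calc (0:ℝ) < Real.exp (-(s * c j0 j0)) := Real.exp_pos _
      _ = M s j0 j0 := hd.symm
      _ ≤ r s := SpecAux.diag_le_specRad (h0 s) j0
  have hanti : ∀ {s t : ℝ}, s ≤ t → r t ≤ r s := by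
    intro s t hst
    calc r t ≤ Real.exp (-((t - s) * cmin)) * r s := hub hst
      _ ≤ 1 * r s := by
        refine mul_le_mul_of_nonneg_right ?_ (hpos s).le
        rw [Real.exp_le_one_iff]
        nlinarith [mul_nonneg (sub_nonneg.2 hst) hcmin_pos.le]
      _ = r s := one_mul _
  have hstrict : StrictAntiOn r (Set.Ici 0) := by
    intro s _ t _ hst
    calc r t ≤ Real.exp (-((t - s) * cmin)) * r s := hub hst.le
      _ < 1 * r s := by
        refine mul_lt_mul_of_pos_right ?_ (hpos s)
        rw [Real.exp_lt_one_iff]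
        nlinarith [mul_pos (sub_pos.2 hst) hcmin_pos]
      _ = r s := one_mul _
  have hdiff : ∀ u v : ℝ, u ≤ v → r u - r v ≤ r u * ((v - u) * cmax) := by
    intro u v huv
    set x := (v - u) * cmax with hx
    have hx0 : 0 ≤ x := by nlinarith
    have h1 : Real.exp (-x) * r u ≤ r v := by
      have h2 := mul_le_mul_of_nonneg_left (hlb huv) (Real.exp_nonneg (-x))
      calc Real.exp (-x) * r u ≤ Real.exp (-x) * (Real.exp x * r v) := h2
        _ = r v := by rw [← mul_assoc, ← Real.exp_add]; simp
    have he : 1 - Real.exp (-x) ≤ x := by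
      have := Real.add_one_le_exp (-x); linarith
    nlinarith [(hpos u).le]
  have hcont : Continuous r := by
    rw [continuous_iff_continuousAt]
    intro a
    apply continuousAt_of_locally_lipschitz zero_lt_one (r (a - 1) * cmax)
    intro y hy
    simp only [Real.dist_eq] at hy ⊢
    rcases le_total y a with hya | hay
    · have h1 : r a ≤ r y := hanti hya
      have h2 : r y - r a ≤ r y * ((a - y) * cmax) := hdiff y a hya
      have hy1 : a - 1 ≤ y := by
        rcases abs_lt.1 hy with ⟨hl, _⟩; linarith
      have h3 : r y ≤ r (a - 1) := hanti hy1
      have h4 : |y - a| = a - y := by rw [abs_of_nonpos (by linarith)]; ring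
      rw [abs_of_nonneg (by linarith), h4]
      have h5 := mul_le_mul_of_nonneg_right h3
        (mul_nonneg (by linarith : (0:ℝ) ≤ a - y) hcmax_pos.le)
      nlinarith [h5]
    · have h1 : r y ≤ r a := hanti hay
      have h2 : r a - r y ≤ r a * ((y - a) * cmax) := hdiff a y hay
      have h3 : r a ≤ r (a - 1) := hanti (by linarith)
      have h4 : |y - a| = y - a := abs_of_nonneg (by linarith)
      rw [abs_of_nonpos (by linarith), h4]
      have h5 := mul_le_mul_of_nonneg_right h3
        (mul_nonneg (by linarith : (0:ℝ) ≤ y - a) hcmax_pos.le)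
      nlinarith [h5]
  -- row sums of `M 0`
  have hrow : ∀ j : Fin (2*g), ∑ l, M 0 j l = 2*(g:ℝ) - 1 := by
    intro j
    have hcard := SpecAux.partner_card g (by omega) j
    have hentry : ∀ l, M 0 j l = if j ≠ l ∧ (j:ℕ)/2 = (l:ℕ)/2 then (0:ℝ) else 1 := by
      intro l; rw [hM]; simp
    rw [Finset.sum_congr rfl (fun l _ => hentry l), Finset.sum_ite, Finset.sum_const,
      Finset.sum_const, smul_zero, zero_add, nsmul_eq_mul, mul_one]
    have hcard2 : (Finset.univ.filter fun l : Fin (2*g) =>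
        ¬(j ≠ l ∧ (j:ℕ)/2 = (l:ℕ)/2)).card = 2*g - 1 := by
      have h := Finset.card_filter_add_card_filter_not
        (s := (Finset.univ : Finset (Fin (2*g))))
        (p := fun l => j ≠ l ∧ (j:ℕ)/2 = (l:ℕ)/2)
      simp only [Finset.card_univ, Fintype.card_fin] at h
      omega
    rw [hcard2]
    have : ((2*g - 1 : ℕ) : ℝ) = 2*(g:ℝ) - 1 := by
      push_cast [Nat.cast_sub (by omega : 1 ≤ 2*g)]
      ring
    rw [this]
  -- spectral radius at 0
  have hr0 : r 0 = 2*(g:ℝ) - 1 := by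
    have hAv : SpecAux.cplx (M 0) *ᵥ (fun _ => (1:ℂ)) =
        ((2*(g:ℝ) - 1 : ℝ) : ℂ) • (fun _ => (1:ℂ)) := by
      funext j
      simp only [Matrix.mulVec, dotProduct, SpecAux.cplx, Matrix.map_apply,
        mul_one, Pi.smul_apply, smul_eq_mul]
      have : ∑ l, (algebraMap ℝ ℂ) (M 0 j l) = ((∑ l, M 0 j l : ℝ) : ℂ) := by
        push_cast
        rfl
      rw [this, hrow j]
    have hmemσ : ((2*(g:ℝ) - 1 : ℝ) : ℂ) ∈ spectrum ℂ (SpecAux.cplx (M 0)) := by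
      rw [spectrum.mem_iff]
      intro hunit
      rw [Matrix.isUnit_iff_isUnit_det] at hunit
      have hdet : (algebraMap ℂ (Matrix (Fin (2*g)) (Fin (2*g)) ℂ)
          (((2*(g:ℝ) - 1 : ℝ) : ℂ)) - SpecAux.cplx (M 0)).det = 0 := by
        rw [← Matrix.exists_mulVec_eq_zero_iff]
        refine ⟨fun _ => 1, ?_, ?_⟩
        · intro h
          have := congrFun h j0
          simp at this
        · rw [Matrix.sub_mulVec, Algebra.algebraMap_eq_smul_one,
            Matrix.smul_mulVec, Matrix.one_mulVec, hAv, sub_self]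
      rw [hdet] at hunit
      simpa using hunit
    have hnormA : ‖SpecAux.cplx (M 0)‖ ≤ 2*(g:ℝ) - 1 := by
      have h1 : ‖SpecAux.cplx (M 0)‖₊ = ‖M 0‖₊ := SpecAux.nnnorm_cplx (M 0)
      have h2 : ‖M 0‖₊ ≤ Real.toNNReal (2*(g:ℝ) - 1) := by
        rw [Matrix.linfty_opNNNorm_def]
        refine Finset.sup_le fun j _ => ?_
        have hsum : ((∑ l, ‖M 0 j l‖₊ : NNReal) : ℝ) = ∑ l, M 0 j l := by
          rw [NNReal.coe_sum]
          exact Finset.sum_congr rfl fun l _ => by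
            rw [coe_nnnorm, Real.norm_of_nonneg (h0 0 j l)]
        rw [← NNReal.coe_le_coe, hsum, hrow j, Real.coe_toNNReal _ (by nlinarith)]
      calc ‖SpecAux.cplx (M 0)‖ = ((‖M 0‖₊ : NNReal) : ℝ) := by rw [← h1]; rfl
        _ ≤ ((Real.toNNReal (2*(g:ℝ) - 1) : NNReal) : ℝ) := NNReal.coe_le_coe.2 h2
        _ = 2*(g:ℝ) - 1 := Real.coe_toNNReal _ (by nlinarith)
    obtain ⟨hne, hbdd⟩ := SpecAux.specRad_mem_aux (M 0)
    refine le_antisymm (csSup_le hne ?_) (le_csSup hbdd ⟨_, hmemσ, ?_⟩)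
    · rintro x ⟨μ, hμ, rfl⟩
      calc ‖μ‖ = ‖μ‖ := rfl
        _ ≤ ‖SpecAux.cplx (M 0)‖ := spectrum.norm_le_norm_of_mem hμ
        _ ≤ _ := hnormA
    · rw [Complex.norm_real, Real.norm_eq_abs, abs_of_nonneg (by nlinarith)]
  -- tendsto 0
  have htend : Filter.Tendsto r Filter.atTop (nhds 0) := by
    have hlim : Filter.Tendsto (fun s => Real.exp (-(s * cmin)) * r 0)
        Filter.atTop (nhds 0) := by
      have h1 : Filter.Tendsto (fun s : ℝ => -(s * cmin)) Filter.atTop Filter.atBot := by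
        have h2 : Filter.Tendsto (fun s : ℝ => s * cmin) Filter.atTop Filter.atTop :=
          Filter.tendsto_id.atTop_mul_const hcmin_pos
        exact tendsto_neg_atTop_atBot.comp h2
      have h3 := (Real.tendsto_exp_atBot.comp h1).mul_const (r 0)
      simpa using h3
    refine tendsto_of_tendsto_of_tendsto_of_le_of_le' tendsto_const_nhds hlim ?_ ?_
    · filter_upwards with s using (hpos s).le
    · filter_upwards [Filter.eventually_ge_atTop (0:ℝ)] with s hs
      have := hub (s := 0) (t := s) hs
      simpa using this
  have h1lt : (1:ℝ) < 2*(g:ℝ) - 1 := by nlinarith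
  refine ⟨hcont.continuousOn, hstrict, hr0, h1lt, htend, ?_⟩
  obtain ⟨s₁, hs₁0, hs₁⟩ : ∃ s₁ : ℝ, 0 ≤ s₁ ∧ r s₁ < 1 := by
    have h := htend.eventually_lt_const (by norm_num : (0:ℝ) < 1)
    obtain ⟨s₁, h1, h2⟩ := ((Filter.eventually_ge_atTop (0:ℝ)).and h).exists
    exact ⟨s₁, h1, h2⟩
  have hIcc : Set.Icc (r s₁) (r 0) ⊆ r '' Set.Icc 0 s₁ :=
    intermediate_value_Icc' hs₁0 hcont.continuousOn
  obtain ⟨s₀, hs₀mem, hs₀⟩ := hIcc ⟨hs₁.le, by rw [hr0]; nlinarith⟩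
  have hs₀pos : 0 < s₀ := by
    rcases lt_or_eq_of_le hs₀mem.1 with h | h
    · exact h
    · exfalso
      rw [← h] at hs₀
      rw [hr0] at hs₀
      nlinarith
  refine ⟨s₀, ⟨hs₀pos, hs₀⟩, ?_⟩
  rintro y ⟨hy0, hy1⟩
  exact hstrict.injOn (Set.mem_Ici.2 hy0.le) (Set.mem_Ici.2 hs₀mem.1) (by rw [hs₀]; exact hy1)
end

section
/- Let P be an n×n real matrix with strictly positive entries, and for s ∈ ℝ_{≥0} let P^{(s)} denote the matrix with entries p_{ij}^s. Suppose all entries of P lie in (0, ξ^{-1}) for some ξ > 1. Then the function s ↦ log λ(P^{(s)}) (λ the spectral radius) is strictly decreasing, with derivative bounded above by −log ξ wherever defined; consequently there is at most one s with λ(P^{(s)}) = 1. -/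
open Matrix

section Aux

open scoped ENNReal NNReal
open Filter

attribute [local instance] Matrix.linftyOpSemiNormedRing Matrix.linftyOpNormedRing
  Matrix.linftyOpNormedAlgebra

variable {n : ℕ}

private lemma entry_nnnorm_le_nnnorm {α : Type*} [SeminormedRing α]
    (M : Matrix (Fin n) (Fin n) α) (i j : Fin n) : ‖M i j‖₊ ≤ ‖M‖₊ := by
  rw [Matrix.linfty_opNNNorm_def]
  refine le_trans ?_
    (Finset.le_sup (f := fun i => ∑ j, ‖M i j‖₊) (Finset.mem_univ i))
  exact Finset.single_le_sum (f := fun k => ‖M i k‖₊) (fun _ _ => zero_le) (Finset.mem_univ j)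

private lemma nnnorm_map_complex (M : Matrix (Fin n) (Fin n) ℝ) :
    ‖M.map (algebraMap ℝ ℂ)‖₊ = ‖M‖₊ := by
  simp only [Matrix.linfty_opNNNorm_def, Matrix.map_apply, Complex.coe_algebraMap,
    Complex.nnnorm_real]

private lemma nnnorm_mono {A B : Matrix (Fin n) (Fin n) ℝ}
    (h : ∀ i j, ‖A i j‖₊ ≤ ‖B i j‖₊) : ‖A‖₊ ≤ ‖B‖₊ := by
  rw [Matrix.linfty_opNNNorm_def, Matrix.linfty_opNNNorm_def]
  exact Finset.sup_mono_fun fun i _ => Finset.sum_le_sum fun j _ => h i j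

private lemma pow_entry_le {A B : Matrix (Fin n) (Fin n) ℝ}
    (hA : ∀ i j, 0 ≤ A i j) (hAB : ∀ i j, A i j ≤ B i j) (k : ℕ) :
    ∀ i j, 0 ≤ (A ^ k) i j ∧ (A ^ k) i j ≤ (B ^ k) i j := by
  induction k with
  | zero => intro i j; simp [Matrix.one_apply]; split <;> simp
  | succ k ih =>
    intro i j
    rw [pow_succ, pow_succ, Matrix.mul_apply, Matrix.mul_apply]
    constructor
    · exact Finset.sum_nonneg fun l _ => mul_nonneg (ih i l).1 (hA l j)
    · exact Finset.sum_le_sum fun l _ => mul_le_mul (ih i l).2 (hAB l j) (hA l j)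
        (le_trans (ih i l).1 (ih i l).2)

private lemma pow_entry_ge {B : Matrix (Fin n) (Fin n) ℝ} {m : ℝ} (hm : 0 < m)
    (hB : ∀ i j, m ≤ B i j) (k : ℕ) :
    ∀ i j, m ^ (k + 1) ≤ (B ^ (k + 1)) i j := by
  induction k with
  | zero => intro i j; simpa using hB i j
  | succ k ih =>
    intro i j
    have hexp : (B ^ (k + 1 + 1)) i j = ∑ l, (B ^ (k + 1)) i l * B l j := by
      rw [pow_succ, Matrix.mul_apply]
    rw [hexp]
    calc m ^ (k + 1 + 1) = m ^ (k + 1) * m := by ring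
    _ ≤ (B ^ (k + 1)) i i * B i j :=
        mul_le_mul (ih i i) (hB i j) hm.le (le_trans (pow_pos hm _).le (ih i i))
    _ ≤ ∑ l, (B ^ (k + 1)) i l * B l j := by
        refine Finset.single_le_sum (f := fun l => (B ^ (k + 1)) i l * B l j)
          (fun l _ => mul_nonneg ?_ (le_trans hm.le (hB l j))) (Finset.mem_univ i)
        exact le_trans (pow_pos hm _).le (ih i l)

private lemma specRad_nonneg_aux (hn : 0 < n) (M : Matrix (Fin n) (Fin n) ℝ) :
    (∃ r, r ∈ {r : ℝ | ∃ μ ∈ spectrum ℂ (M.map (algebraMap ℝ ℂ)), r = ‖μ‖}) ∧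
      BddAbove {r : ℝ | ∃ μ ∈ spectrum ℂ (M.map (algebraMap ℝ ℂ)), r = ‖μ‖} ∧
      0 ≤ specRad M := by
  haveI : NeZero n := ⟨hn.ne'⟩
  haveI : CompleteSpace (Matrix (Fin n) (Fin n) ℂ) :=
    FiniteDimensional.complete ℂ (Matrix (Fin n) (Fin n) ℂ)
  obtain ⟨μ, hμ⟩ := spectrum.nonempty (M.map (algebraMap ℝ ℂ))
  have hne : (‖μ‖) ∈
      {r : ℝ | ∃ μ ∈ spectrum ℂ (M.map (algebraMap ℝ ℂ)), r = ‖μ‖} := ⟨μ, hμ, rfl⟩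
  have hbdd : BddAbove {r : ℝ | ∃ μ ∈ spectrum ℂ (M.map (algebraMap ℝ ℂ)), r = ‖μ‖} := by
    refine ⟨‖M.map (algebraMap ℝ ℂ)‖, ?_⟩
    rintro r ⟨ν, hν, rfl⟩
    exact spectrum.norm_le_norm_of_mem hν
  exact ⟨⟨_, hne⟩, hbdd, le_trans (norm_nonneg μ) (le_csSup hbdd hne)⟩

private lemma spectralRadius_le_ofReal (hn : 0 < n) (M : Matrix (Fin n) (Fin n) ℝ) :
    spectralRadius ℂ (M.map (algebraMap ℝ ℂ)) ≤ ENNReal.ofReal (specRad M) := by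
  obtain ⟨_, hbdd, _⟩ := specRad_nonneg_aux hn M
  rw [spectralRadius]
  refine iSup₂_le fun μ hμ => ?_
  have h1 : ‖μ‖ ≤ specRad M := le_csSup hbdd ⟨μ, hμ, rfl⟩
  calc (‖μ‖₊ : ℝ≥0∞) = ENNReal.ofReal (‖μ‖) := by
        rw [← enorm_eq_nnnorm, ← ofReal_norm]
  _ ≤ ENNReal.ofReal (specRad M) := ENNReal.ofReal_le_ofReal h1

private lemma ofReal_le_spectralRadius {M : Matrix (Fin n) (Fin n) ℝ} {m : ℝ} (hm : 0 < m)
    (hB : ∀ i j, m ≤ M i j) (hn : 0 < n) :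
    ENNReal.ofReal m ≤ spectralRadius ℂ (M.map (algebraMap ℝ ℂ)) := by
  haveI : NeZero n := ⟨hn.ne'⟩
  haveI : CompleteSpace (Matrix (Fin n) (Fin n) ℂ) :=
    FiniteDimensional.complete ℂ (Matrix (Fin n) (Fin n) ℂ)
  have hmap : ∀ k : ℕ, (M.map (algebraMap ℝ ℂ)) ^ k = (M ^ k).map (algebraMap ℝ ℂ) := by
    intro k
    rw [← RingHom.mapMatrix_apply, ← RingHom.mapMatrix_apply, map_pow]
  set M' := M.map (algebraMap ℝ ℂ) with hM'
  have key : ∀ k : ℕ, ENNReal.ofReal m ≤ (‖M' ^ (k + 1)‖₊ : ℝ≥0∞) ^ (1 / (k + 1 : ℕ) : ℝ) := by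
    intro k
    have hent : m ^ (k + 1) ≤ (M ^ (k + 1)) 0 0 := pow_entry_ge hm hB k 0 0
    have h1 : (ENNReal.ofReal m) ^ (k + 1 : ℕ) ≤ (‖M' ^ (k + 1)‖₊ : ℝ≥0∞) := by
      rw [hmap, nnnorm_map_complex]
      calc (ENNReal.ofReal m) ^ (k + 1 : ℕ) = ENNReal.ofReal (m ^ (k + 1)) := by
            rw [ENNReal.ofReal_pow hm.le]
      _ ≤ ENNReal.ofReal ((M ^ (k + 1)) 0 0) := ENNReal.ofReal_le_ofReal hent
      _ = (‖(M ^ (k + 1)) 0 0‖₊ : ℝ≥0∞) := by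
            rw [← enorm_eq_nnnorm, ← ofReal_norm, Real.norm_eq_abs,
              abs_of_nonneg (le_trans (pow_pos hm _).le hent)]
      _ ≤ (‖M ^ (k + 1)‖₊ : ℝ≥0∞) := by
            exact_mod_cast entry_nnnorm_le_nnnorm (M ^ (k + 1)) 0 0
    have h2 : ((ENNReal.ofReal m) ^ (k + 1 : ℕ)) ^ (1 / (k + 1 : ℕ) : ℝ) ≤
        (‖M' ^ (k + 1)‖₊ : ℝ≥0∞) ^ (1 / (k + 1 : ℕ) : ℝ) := by
      exact ENNReal.rpow_le_rpow h1 (by positivity)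
    calc ENNReal.ofReal m
        = ((ENNReal.ofReal m) ^ (k + 1 : ℕ)) ^ (1 / (k + 1 : ℕ) : ℝ) := by
          rw [← ENNReal.rpow_natCast, ← ENNReal.rpow_mul]
          rw [mul_one_div, div_self (by positivity), ENNReal.rpow_one]
    _ ≤ _ := h2
  have hlim := spectrum.pow_nnnorm_pow_one_div_tendsto_nhds_spectralRadius M'
  refine ge_of_tendsto hlim ?_
  filter_upwards [Filter.eventually_ge_atTop 1] with k hk
  obtain ⟨k', rfl⟩ := Nat.exists_eq_add_of_le hk
  simpa [add_comm 1 k'] using key k'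

/-- Positivity of the spectral radius of an entrywise positive matrix. -/
private lemma specRad_pos (hn : 0 < n) {M : Matrix (Fin n) (Fin n) ℝ}
    (hM : ∀ i j, 0 < M i j) : 0 < specRad M := by
  haveI : NeZero n := ⟨hn.ne'⟩
  obtain ⟨p, -, hp⟩ := Finset.exists_min_image (Finset.univ : Finset (Fin n × Fin n))
    (fun q => M q.1 q.2) ⟨(0, 0), Finset.mem_univ _⟩
  set m := M p.1 p.2 with hm
  have hmpos : 0 < m := hM p.1 p.2
  have hBm : ∀ i j, m ≤ M i j := fun i j => hp (i, j) (Finset.mem_univ _)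
  have h1 := ofReal_le_spectralRadius hmpos hBm hn
  have h2 := spectralRadius_le_ofReal hn M
  have h3 : ENNReal.ofReal m ≤ ENNReal.ofReal (specRad M) := le_trans h1 h2
  obtain ⟨-, -, h0⟩ := specRad_nonneg_aux hn M
  have := (ENNReal.ofReal_le_ofReal_iff h0).mp h3
  linarith

/-- The key comparison: if `0 ≤ A ≤ c • B` entrywise with `c > 0`, then
`specRad A ≤ c * specRad B`. -/
private lemma specRad_le_mul (hn : 0 < n) {A B : Matrix (Fin n) (Fin n) ℝ} {c : ℝ}
    (hc : 0 < c) (hA : ∀ i j, 0 ≤ A i j) (hB : ∀ i j, 0 ≤ B i j)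
    (hAB : ∀ i j, A i j ≤ c * B i j) : specRad A ≤ c * specRad B := by
  haveI : NeZero n := ⟨hn.ne'⟩
  haveI : CompleteSpace (Matrix (Fin n) (Fin n) ℂ) :=
    FiniteDimensional.complete ℂ (Matrix (Fin n) (Fin n) ℂ)
  obtain ⟨hAne, hAbdd, hA0⟩ := specRad_nonneg_aux hn A
  obtain ⟨-, -, hB0⟩ := specRad_nonneg_aux hn B
  have hmapA : ∀ k : ℕ, (A.map (algebraMap ℝ ℂ)) ^ k = (A ^ k).map (algebraMap ℝ ℂ) := fun k => by
    rw [← RingHom.mapMatrix_apply, ← RingHom.mapMatrix_apply, map_pow]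
  have hmapB : ∀ k : ℕ, (B.map (algebraMap ℝ ℂ)) ^ k = (B ^ k).map (algebraMap ℝ ℂ) := fun k => by
    rw [← RingHom.mapMatrix_apply, ← RingHom.mapMatrix_apply, map_pow]
  set A' := A.map (algebraMap ℝ ℂ) with hA'
  set B' := B.map (algebraMap ℝ ℂ) with hB'
  -- entrywise bound: A ≤ (c • B), hence A^k ≤ c^k B^k entrywise, hence norm bound
  have hnormpow : ∀ k : ℕ, (‖A' ^ k‖₊ : ℝ≥0∞) ≤ ENNReal.ofReal (c ^ k) * ‖B' ^ k‖₊ := by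
    intro k
    have hcB : ∀ i j, 0 ≤ (c • B) i j := fun i j => by
      simpa using mul_nonneg hc.le (hB i j)
    have h1 := pow_entry_le (B := c • B) hA (fun i j => by simpa [Matrix.smul_apply] using hAB i j) k
    have hsmul : (c • B) ^ k = (c ^ k) • (B ^ k) := by
      rw [smul_pow]
    have hAk : ‖A ^ k‖₊ ≤ ‖(c ^ k) • (B ^ k)‖₊ := by
      rw [← hsmul]
      refine nnnorm_mono fun i j => ?_
      have h2 := (h1 i j).2
      have h3 := (h1 i j).1
      rw [Real.nnnorm_of_nonneg h3, Real.nnnorm_of_nonneg (le_trans h3 h2)]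
      exact h2
    have hck : ‖(c ^ k) • (B ^ k)‖₊ = ‖c ^ k‖₊ * ‖B ^ k‖₊ := by
      exact nnnorm_smul _ _
    rw [hmapA, hmapB, nnnorm_map_complex, nnnorm_map_complex]
    calc (‖A ^ k‖₊ : ℝ≥0∞) ≤ (‖c ^ k‖₊ : ℝ≥0∞) * ‖B ^ k‖₊ := by
          exact_mod_cast hAk.trans hck.le
    _ = ENNReal.ofReal (c ^ k) * ‖B ^ k‖₊ := by
          congr 1
          rw [← enorm_eq_nnnorm, ← ofReal_norm, Real.norm_eq_abs,
            abs_of_nonneg (pow_nonneg hc.le k)]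
  -- each eigenvalue of A' is bounded by c * specRad B
  refine csSup_le hAne ?_
  rintro r ⟨μ, hμ, rfl⟩
  -- pass to ℝ≥0∞
  have key : ∀ k : ℕ, (‖μ‖₊ : ℝ≥0∞) ≤
      ENNReal.ofReal c * (‖B' ^ (k + 1)‖₊ : ℝ≥0∞) ^ (1 / (k + 1 : ℕ) : ℝ) := by
    intro k
    have hμk : μ ^ (k + 1) ∈ spectrum ℂ (A' ^ (k + 1)) :=
      spectrum.pow_image_subset A' (k + 1) ⟨μ, hμ, rfl⟩
    have h1 : (‖μ ^ (k + 1)‖₊ : ℝ≥0∞) ≤ ‖A' ^ (k + 1)‖₊ := by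
      have := spectrum.norm_le_norm_of_mem hμk
      rw [← enorm_eq_nnnorm, ← enorm_eq_nnnorm, ← ofReal_norm, ← ofReal_norm]
      exact ENNReal.ofReal_le_ofReal this
    have h2 : (‖μ‖₊ : ℝ≥0∞) ^ (k + 1 : ℕ) ≤
        ENNReal.ofReal (c ^ (k + 1)) * ‖B' ^ (k + 1)‖₊ := by
      refine le_trans ?_ (le_trans h1 (hnormpow (k + 1)))
      rw [← ENNReal.coe_pow, ← nnnorm_pow]
    have h3 := ENNReal.rpow_le_rpow h2 (by positivity : (0:ℝ) ≤ 1 / (k + 1 : ℕ))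
    have hμeq : ((‖μ‖₊ : ℝ≥0∞) ^ (k + 1 : ℕ)) ^ (1 / (k + 1 : ℕ) : ℝ) = (‖μ‖₊ : ℝ≥0∞) := by
      rw [← ENNReal.rpow_natCast, ← ENNReal.rpow_mul, mul_one_div,
        div_self (by positivity), ENNReal.rpow_one]
    have hceq : (ENNReal.ofReal (c ^ (k + 1))) ^ (1 / (k + 1 : ℕ) : ℝ) = ENNReal.ofReal c := by
      rw [ENNReal.ofReal_pow hc.le, ← ENNReal.rpow_natCast, ← ENNReal.rpow_mul, mul_one_div,
        div_self (by positivity), ENNReal.rpow_one]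
    calc (‖μ‖₊ : ℝ≥0∞) = ((‖μ‖₊ : ℝ≥0∞) ^ (k + 1 : ℕ)) ^ (1 / (k + 1 : ℕ) : ℝ) := hμeq.symm
    _ ≤ (ENNReal.ofReal (c ^ (k + 1)) * ‖B' ^ (k + 1)‖₊) ^ (1 / (k + 1 : ℕ) : ℝ) := h3
    _ = ENNReal.ofReal c * (‖B' ^ (k + 1)‖₊ : ℝ≥0∞) ^ (1 / (k + 1 : ℕ) : ℝ) := by
        rw [ENNReal.mul_rpow_of_nonneg _ _ (by positivity), hceq]
  have hlim := spectrum.pow_nnnorm_pow_one_div_tendsto_nhds_spectralRadius B'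
  have hlim2 : Filter.Tendsto
      (fun k : ℕ => ENNReal.ofReal c * (‖B' ^ k‖₊ : ℝ≥0∞) ^ (1 / k : ℝ)) atTop
      (nhds (ENNReal.ofReal c * spectralRadius ℂ B')) := by
    exact ENNReal.Tendsto.const_mul hlim (Or.inr ENNReal.ofReal_ne_top)
  have hμle : (‖μ‖₊ : ℝ≥0∞) ≤ ENNReal.ofReal c * spectralRadius ℂ B' := by
    refine ge_of_tendsto hlim2 ?_
    filter_upwards [Filter.eventually_ge_atTop 1] with k hk
    obtain ⟨k', rfl⟩ := Nat.exists_eq_add_of_le hk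
    simpa [add_comm 1 k'] using key k'
  have hfinal : (‖μ‖₊ : ℝ≥0∞) ≤ ENNReal.ofReal (c * specRad B) := by
    refine le_trans hμle ?_
    rw [ENNReal.ofReal_mul hc.le]
    exact mul_le_mul_right (spectralRadius_le_ofReal hn B) _
  rw [← enorm_eq_nnnorm, ← ofReal_norm] at hfinal
  have := (ENNReal.ofReal_le_ofReal_iff (mul_nonneg hc.le hB0)).mp hfinal
  exact this

end Aux

/-- Let `P` be an `n × n` real matrix with all entries in `(0, ξ⁻¹)` for some `ξ > 1`,
and let `P^{(s)}` denote the entrywise `s`-th power. Then `s ↦ log λ(P^{(s)})`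
decreases at rate at least `log ξ` (i.e. its derivative is bounded above by `-log ξ`),
is strictly decreasing on `[0, ∞)`, and consequently there is at most one `s ≥ 0` with
`λ(P^{(s)}) = 1`. -/
theorem log_specRad_strictAnti (n : ℕ) (hn : 0 < n) (ξ : ℝ) (hξ : 1 < ξ)
    (P : Matrix (Fin n) (Fin n) ℝ)
    (hP : ∀ i j, P i j ∈ Set.Ioo (0:ℝ) ξ⁻¹) :
    (∀ s₁ s₂ : ℝ, 0 ≤ s₁ → s₁ < s₂ →
      Real.log (specRad (Matrix.of fun i j => P i j ^ s₂)) ≤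
        Real.log (specRad (Matrix.of fun i j => P i j ^ s₁)) - Real.log ξ * (s₂ - s₁)) ∧
    StrictAntiOn (fun s : ℝ => Real.log (specRad (Matrix.of fun i j => P i j ^ s)))
      (Set.Ici 0) ∧
    (∀ s₁ s₂ : ℝ, 0 ≤ s₁ → 0 ≤ s₂ →
      specRad (Matrix.of fun i j => P i j ^ s₁) = 1 →
      specRad (Matrix.of fun i j => P i j ^ s₂) = 1 → s₁ = s₂) := by
  have hξ0 : 0 < ξ := lt_trans one_pos hξ
  have hlogξ : 0 < Real.log ξ := Real.log_pos hξ
  set f : ℝ → ℝ := fun s => specRad (Matrix.of fun i j => P i j ^ s) with hf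
  have hfpos : ∀ s : ℝ, 0 < f s := by
    intro s
    refine specRad_pos hn fun i j => ?_
    exact Real.rpow_pos_of_pos (hP i j).1 s
  have hkey : ∀ s₁ s₂ : ℝ, 0 ≤ s₁ → s₁ < s₂ →
      Real.log (f s₂) ≤ Real.log (f s₁) - Real.log ξ * (s₂ - s₁) := by
    intro s₁ s₂ hs₁ hs
    set c : ℝ := ξ ^ (-(s₂ - s₁)) with hc
    have hcpos : 0 < c := Real.rpow_pos_of_pos hξ0 _
    have hcomp : ∀ i j, (Matrix.of fun i j => P i j ^ s₂) i j ≤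
        c * (Matrix.of fun i j => P i j ^ s₁) i j := by
      intro i j
      have hPij := hP i j
      have h1 : P i j ^ s₂ = P i j ^ s₁ * P i j ^ (s₂ - s₁) := by
        rw [← Real.rpow_add hPij.1]; ring_nf
      have h2 : P i j ^ (s₂ - s₁) ≤ (ξ⁻¹) ^ (s₂ - s₁) :=
        Real.rpow_le_rpow hPij.1.le hPij.2.le (by linarith)
      have h3 : (ξ⁻¹ : ℝ) ^ (s₂ - s₁) = c := by
        rw [hc, Real.inv_rpow hξ0.le, ← Real.rpow_neg hξ0.le]
      simp only [Matrix.of_apply]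
      rw [h1]
      calc P i j ^ s₁ * P i j ^ (s₂ - s₁) ≤ P i j ^ s₁ * c := by
            rw [← h3]
            exact mul_le_mul_of_nonneg_left h2 (Real.rpow_nonneg hPij.1.le s₁)
      _ = c * P i j ^ s₁ := mul_comm _ _
    have hle : f s₂ ≤ c * f s₁ := by
      refine specRad_le_mul hn hcpos (fun i j => ?_) (fun i j => ?_) hcomp
      · exact (Real.rpow_pos_of_pos (hP i j).1 _).le
      · exact (Real.rpow_pos_of_pos (hP i j).1 _).le
    have hloglel : Real.log (f s₂) ≤ Real.log (c * f s₁) :=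
      Real.log_le_log (hfpos s₂) hle
    rw [Real.log_mul hcpos.ne' (hfpos s₁).ne', hc, Real.log_rpow hξ0] at hloglel
    linarith
  refine ⟨hkey, ?_, ?_⟩
  · intro a ha b hb hab
    have hthis := hkey a b ha hab
    have hpos : 0 < Real.log ξ * (b - a) := mul_pos hlogξ (by linarith)
    show Real.log (f b) < Real.log (f a)
    linarith
  · intro s₁ s₂ hs₁ hs₂ h1 h2
    by_contra hne
    have e1 : f s₁ = 1 := h1
    have e2 : f s₂ = 1 := h2
    rcases lt_or_gt_of_ne hne with h | h
    · have hthis := hkey s₁ s₂ hs₁ h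
      rw [e1, e2] at hthis
      simp only [Real.log_one] at hthis
      nlinarith
    · have hthis := hkey s₂ s₁ hs₂ h
      rw [e1, e2] at hthis
      simp only [Real.log_one] at hthis
      nlinarith
end
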